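/- Let X be a finite group, V a faithful simple kX-module, Y a normal nilpotent subgroup of X acting irreducibly on V with Y/Z(Y) a minimal normal subgroup of X/Z(X), and Q an elementary Abelian p-subgroup of order p^2 with X = YQ and Y a p'-group. Then for each nontrivial a ∈ Q, C_Y(a) = Z(Y), and this leads to a contradiction since Y = ⟨C_Y(a) : a ∈ Q, a ≠ 1⟩ ≠ Z(Y). -/

import Mathlib

/-!
Schur's lemma makes every element centralizing `Y` act on `V` as a scalar; as `V` is faithful and
`k` has characteristic `p`, no nontrivial `p`-element of `X` centralizes `Y`.

Put `Z = Z(X)` and `W = YZ/Z`. Being nilpotent and minimal normal in `X/Z`, `W` is abelian. For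
`1 ≠ a ∈ Q`, `C_W(aZ)` is normal in `X/Z = W · QZ/Z`, hence trivial or all of `W`; in the latter
case every commutator `[y, a]`, `y ∈ Y`, is a central `p`-element of the `p'`-group `Y`, hence
trivial, so `a` centralizes `Y`, which is impossible. So `QZ/Z ≅ C_p × C_p` acts fixed-point-freely
on `W`. Multiplying the norms of the `p` cyclic subgroups `⟨a b ^ j⟩` of `⟨a, b⟩` gives
`w ^ p` (the norm of `⟨b⟩` absorbs the remaining factors), so `W` has exponent `p`; but `W` is a
nontrivial `p'`-group. This is the abelian case of `Y = ⟨C_Y(a) : 1 ≠ a ∈ Q⟩`.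
-/

open CategoryTheory Limits MonoidalCategory

/-- Restriction of a representation to a subgroup. -/
noncomputable def resRep {k : Type} [Field k] {X : Type} [Group X] (Z : Subgroup X)
    (M : Rep k X) : Rep k Z :=
  Rep.of (M.ρ.comp Z.subtype)

open Subgroup
open scoped commutatorElement

section Schur

variable {k : Type} [Field k] {X : Type} [Group X] (V : Rep k X) (Y : Subgroup X)

instance {A B : Rep k X} [FiniteDimensional k A.V] [FiniteDimensional k B.V] :
    FiniteDimensional k (A ⟶ B) :=
  let forget : (A ⟶ B) →ₗ[k] A.V →ₗ[k] B.V :=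
    { toFun := fun f => f.hom.toLinearMap
      map_add' := fun _ _ => rfl
      map_smul' := fun _ _ => rfl }
  .of_injective forget fun _ _ h => Rep.hom_ext (Representation.IntertwiningMap.ext h)

instance [FiniteDimensional k V.V] : FiniteDimensional k (resRep Y V).V := ‹_›

noncomputable def resRepEndOfMemCentralizer {c : X} (hc : c ∈ centralizer (Y : Set X)) :
    resRep Y V ⟶ resRep Y V :=
  Rep.ofHom ⟨V.ρ c, fun y => by
    change V.ρ c * V.ρ y = V.ρ y * V.ρ c
    rw [← map_mul, ← map_mul, hc y y.2]⟩

theorem exists_eq_smul_one_of_mem_centralizer [IsAlgClosed k] [FiniteDimensional k V.V]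
    [Simple (resRep Y V)] {c : X} (hc : c ∈ centralizer (Y : Set X)) :
    ∃ μ : k, V.ρ c = μ • 1 := by
  obtain ⟨μ, hμ⟩ := endomorphism_simple_eq_smul_id k (resRepEndOfMemCentralizer V Y hc)
  exact ⟨μ, (congrArg (fun f => f.hom.toLinearMap) hμ).symm⟩

theorem eq_one_of_mem_centralizer_of_pow_eq_one {p : ℕ} [Fact p.Prime] [CharP k p]
    [IsAlgClosed k] [FiniteDimensional k V.V] [Simple (resRep Y V)]
    (hV : Function.Injective V.ρ) {c : X} (hc : c ∈ centralizer (Y : Set X)) (hcp : c ^ p = 1) :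
    c = 1 := by
  rcases subsingleton_or_nontrivial V.V with hV0 | hV0
  · exact hV (Subsingleton.elim _ _)
  obtain ⟨μ, hμ⟩ := exists_eq_smul_one_of_mem_centralizer V Y hc
  have hμp : μ ^ p = 1 := by
    have h := congrArg V.ρ hcp
    rw [map_pow, hμ, smul_pow, one_pow, map_one, ← Algebra.algebraMap_eq_smul_one] at h
    exact (algebraMap k (Module.End k V.V)).injective (by rw [h, map_one])
  have hμ1 : μ = 1 := frobenius_inj k p (by rw [frobenius_def, map_one, hμp])
  exact hV (by rw [hμ, hμ1, one_smul, map_one])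

end Schur

section PowVal

variable {G : Type*} [Monoid G] {p : ℕ} {g : G}

theorem pow_val_add_of_pow_eq_one [NeZero p] (hg : g ^ p = 1) (i j : ZMod p) :
    g ^ (i + j).val = g ^ i.val * g ^ j.val := by
  rw [ZMod.val_add, ← pow_eq_pow_mod _ hg, pow_add]

theorem pow_val_mul_of_pow_eq_one (hg : g ^ p = 1) (i j : ZMod p) :
    g ^ (i * j).val = (g ^ i.val) ^ j.val := by
  rw [ZMod.val_mul, ← pow_eq_pow_mod _ hg, pow_mul]

end PowVal

section CyclicNorm

variable {A M : Type*} [Group A] [CommGroup M] [MulDistribMulAction A M]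

def cyclicNorm (p : ℕ) [NeZero p] (g : A) (m : M) : M := ∏ i : ZMod p, g ^ i.val • m

theorem smul_cyclicNorm {p : ℕ} [NeZero p] {g : A} (hg : g ^ p = 1) (m : M) :
    g • cyclicNorm p g m = cyclicNorm p g m := by
  rw [cyclicNorm, Finset.smul_prod']
  refine Fintype.prod_equiv (Equiv.addRight 1) _ _ fun i => ?_
  rw [smul_smul, Equiv.coe_addRight, pow_val_add_of_pow_eq_one hg, ZMod.val_one_eq_one_mod,
    ← pow_eq_pow_mod _ hg, pow_one, (Commute.self_pow g _).eq]

/-- After swapping the two products, the row `i = 0` is `m ^ p` and, as `j ↦ j * i` permutes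
`ZMod p`, the row `i ≠ 0` is `a ^ i • cyclicNorm p b m`. -/
theorem prod_cyclicNorm_mul_pow {p : ℕ} [Fact p.Prime] {a b : A} (hab : Commute a b)
    (hb : b ^ p = 1) {m : M} (hm : cyclicNorm p b m = 1) :
    ∏ j : ZMod p, cyclicNorm p (a * b ^ j.val) m = m ^ p := by
  have hterm (i j : ZMod p) : (a * b ^ j.val) ^ i.val • m = a ^ i.val • b ^ (j * i).val • m := by
    rw [(hab.pow_right _).mul_pow, pow_val_mul_of_pow_eq_one hb, mul_smul]
  have hrow (i : ZMod p) (hi : i ≠ 0) : ∏ j : ZMod p, a ^ i.val • b ^ (j * i).val • m = 1 := by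
    rw [← Finset.smul_prod', ← smul_one (a ^ i.val), ← hm, cyclicNorm]
    exact congrArg _ (Fintype.prod_equiv (Equiv.mulRight₀ i hi) _ _ fun j => rfl)
  simp only [cyclicNorm, hterm]
  rw [Finset.prod_comm, ← Finset.mul_prod_erase _ _ (Finset.mem_univ 0),
    Finset.prod_eq_one fun i hi => hrow i (Finset.ne_of_mem_erase hi)]
  simp

theorem pow_eq_one_of_fixedPointFree {p : ℕ} [Fact p.Prime] {a b : A} (hab : Commute a b)
    (ha : a ^ p = 1) (hb : b ^ p = 1) (hfree_b : ∀ m : M, b • m = m → m = 1)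
    (hfree_ab : ∀ j : ℕ, ∀ m : M, (a * b ^ j) • m = m → m = 1) (m : M) : m ^ p = 1 := by
  have hpow (j : ℕ) : (a * b ^ j) ^ p = 1 := by
    rw [(hab.pow_right j).mul_pow, ha, ← pow_mul, mul_comm, pow_mul, hb, one_pow, one_mul]
  rw [← prod_cyclicNorm_mul_pow hab hb (hfree_b _ (smul_cyclicNorm hb m))]
  exact Finset.prod_eq_one fun j _ => hfree_ab _ _ (smul_cyclicNorm (hpow _) m)

end CyclicNorm

section GroupTheory

variable {G : Type*} [Group G]

theorem commutator_self_lt_of_ne_bot {N : Subgroup G} [Group.IsSolvable N] (hN : N ≠ ⊥) :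
    ⁅N, N⁆ < N := by
  rw [← nontrivial_iff_ne_bot] at hN
  rw [← N.range_subtype, MonoidHom.range_eq_map, ← map_commutator, map_subtype_lt_map_subtype]
  exact Group.IsSolvable.commutator_lt_top_of_nontrivial N

theorem isMulCommutative_of_minimal_normal {N : Subgroup G} [N.Normal] [Group.IsSolvable N]
    (hN : N ≠ ⊥) (hmin : ∀ K : Subgroup G, K.Normal → K ≤ N → K = ⊥ ∨ K = N) :
    IsMulCommutative N := by
  rw [← commutator_self_eq_bot_iff]
  exact (hmin _ inferInstance (commutator_le_left N N)).resolve_right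
    (commutator_self_lt_of_ne_bot hN).ne

/-- `W ⊓ centralizer {a}` is normalized by `W` because `W` is abelian, and by `S` because `S`
normalizes `W` and centralizes `a`. -/
theorem normal_inf_centralizer_of_sup_eq_top {W S : Subgroup G} [W.Normal] [IsMulCommutative W]
    [IsMulCommutative S] (hWS : W ⊔ S = ⊤) {a : G} (ha : a ∈ S) :
    (W ⊓ centralizer {a}).Normal := by
  have hS : S ≤ centralizer {a} :=
    (le_centralizer S).trans (centralizer_le (Set.singleton_subset_iff.mpr ha))
  rw [← normalizer_eq_top_iff, eq_top_iff, ← hWS, sup_le_iff]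
  constructor
  · exact (le_centralizer W).trans
      ((centralizer_le inf_le_left).trans (centralizer_le_normalizer _))
  · exact (le_inf le_normalizer_of_normal (hS.trans le_normalizer)).trans
      inf_normalizer_le_normalizer_inf

theorem commutatorElement_pow_eq_one {y a : G} {n : ℕ} (hc : Commute ⁅y, a⁆ a) (ha : a ^ n = 1) :
    ⁅y, a⁆ ^ n = 1 := by
  have hconj : y * a * y⁻¹ = ⁅y, a⁆ * a := by rw [commutatorElement_def]; group
  have : (y * a * y⁻¹) ^ n = 1 := by rw [conj_pow, ha, mul_one, mul_inv_cancel]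
  rwa [hconj, hc.mul_pow, ha, mul_one] at this

theorem eq_one_of_pow_eq_one_of_not_dvd_card {p : ℕ} (hp : p.Prime) {H : Subgroup G}
    (hH : ¬ p ∣ Nat.card H) {x : G} (hx : x ∈ H) (hxp : x ^ p = 1) : x = 1 := by
  rcases hp.eq_one_or_self_of_dvd _ (orderOf_dvd_of_pow_eq_one hxp) with h | h
  · exact orderOf_eq_one_iff.mp h
  · exact absurd (h ▸ H.orderOf_dvd_natCard hx) hH

theorem mem_centralizer_of_map_mk'_le_centralizer {p : ℕ} (hp : p.Prime) {Y : Subgroup G}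
    [Y.Normal] (hY : ¬ p ∣ Nat.card Y) {a : G} (ha : a ^ p = 1)
    (h : Y.map (QuotientGroup.mk' (center G)) ≤ centralizer {QuotientGroup.mk' (center G) a}) :
    a ∈ centralizer (Y : Set G) := by
  refine mem_centralizer_iff.mpr fun y hy => ?_
  have hcZ : ⁅y, a⁆ ∈ center G := by
    rw [← QuotientGroup.eq_one_iff, ← QuotientGroup.mk'_apply, map_commutatorElement,
      commutatorElement_eq_one_iff_mul_comm]
    exact mem_centralizer_singleton_iff.mp (h (mem_map_of_mem _ hy))
  have hcY : ⁅y, a⁆ ∈ Y := by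
    simpa only [commutatorElement_def, mul_assoc] using
      mul_mem hy (Normal.conj_mem inferInstance _ (inv_mem hy) a)
  have hc := commutatorElement_pow_eq_one ((mem_center_iff.mp hcZ a).symm) ha
  exact commutatorElement_eq_one_iff_mul_comm.mp
    (eq_one_of_pow_eq_one_of_not_dvd_card hp hY hcY hc)

theorem exists_ne_one_notMem_zpowers {p : ℕ} (hp : p.Prime) {Q : Subgroup G}
    (hQcard : Nat.card Q = p ^ 2) (hQexp : ∀ q ∈ Q, q ^ p = 1) :
    ∃ b ∈ Q, b ≠ 1 ∧ ∃ a ∈ Q, a ∉ zpowers b := by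
  have hnot (b : G) (hb : b ∈ Q) : ∃ a ∈ Q, a ∉ zpowers b := by
    by_contra! h
    have hQ : Q = zpowers b := le_antisymm h (zpowers_le.mpr hb)
    have := orderOf_dvd_of_pow_eq_one (hQexp b hb)
    rw [← Nat.card_zpowers, ← hQ, hQcard] at this
    exact absurd (Nat.le_of_dvd hp.pos this) (by nlinarith [hp.two_le])
  obtain ⟨b, hbQ, hb⟩ := hnot 1 Q.one_mem
  exact ⟨b, hbQ, by simpa using hb, hnot b hbQ⟩

theorem card_map_of_forall_map_eq_one {H : Type*} [Group H] {f : G →* H} {Q : Subgroup G}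
    (hf : ∀ q ∈ Q, f q = 1 → q = 1) : Nat.card (Q.map f) = Nat.card Q := by
  rw [← f.domRestrict_range Q]
  exact Nat.card_congr (MonoidHom.ofInjective ((injective_iff_map_eq_one _).mpr
    fun q hq => Subtype.ext (hf q q.2 hq))).toEquiv.symm

open scoped IsMulCommutative in
theorem pow_eq_one_of_inf_centralizer_eq_bot {p : ℕ} [Fact p.Prime] {W S : Subgroup G} [W.Normal]
    [IsMulCommutative W] (hScard : Nat.card S = p ^ 2) (hSexp : ∀ s ∈ S, s ^ p = 1)
    (hfree : ∀ s ∈ S, s ≠ 1 → W ⊓ centralizer {s} = ⊥) {w : G} (hw : w ∈ W) : w ^ p = 1 := by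
  have hfix {s : G} (hs : s ∈ S) (hs1 : s ≠ 1) (m : W) (hm : ConjAct.toConjAct s • m = m) :
      m = 1 := by
    have hsm : (m : G) * s = s * m := by
      have := congrArg Subtype.val hm
      rw [ConjAct.Subgroup.val_conj_smul, ConjAct.toConjAct_smul] at this
      exact (mul_inv_eq_iff_eq_mul.mp this).symm
    have : (m : G) ∈ W ⊓ centralizer {s} := ⟨m.2, mem_centralizer_singleton_iff.mpr hsm⟩
    rw [hfree s hs hs1, mem_bot] at this
    exact Subtype.ext this
  have := IsPGroup.isMulCommutative_of_card_eq_prime_sq hScard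
  obtain ⟨b, hbS, hb1, a, haS, ha_b⟩ := exists_ne_one_notMem_zpowers Fact.out hScard hSexp
  have hab1 (j : ℕ) : a * b ^ j ≠ 1 := fun h =>
    ha_b (eq_inv_of_mul_eq_one_left h ▸ inv_mem (pow_mem (mem_zpowers b) j))
  have hab : Commute a b := setLike_mul_comm haS hbS
  have hm := pow_eq_one_of_fixedPointFree (M := W) (hab.map ConjAct.toConjAct)
    (by rw [← map_pow, hSexp a haS, map_one]) (by rw [← map_pow, hSexp b hbS, map_one])
    (hfix hbS hb1)
    (fun j => by
      rw [← map_pow, ← map_mul]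
      exact hfix (mul_mem haS (pow_mem hbS j)) (hab1 j)) ⟨w, hw⟩
  exact congrArg Subtype.val hm

end GroupTheory

theorem nilpotent_case_contradiction_general
    (p : ℕ) (hp : p.Prime) (k : Type) [Field k] [IsAlgClosed k] [CharP k p]
    (X : Type) [Group X]
    (V : Rep k X) [FiniteDimensional k V.V]
    (hVfaithful : Function.Injective V.ρ)
    (Y : Subgroup X) (hYnorm : Y.Normal) (hYnilp : Group.IsNilpotent ↥Y)
    (hYp' : ¬ p ∣ Nat.card Y)
    (hYirr : Simple (resRep Y V))
    (hmin_ne : Y.map (QuotientGroup.mk' (Subgroup.center X)) ≠ ⊥)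
    (hmin : ∀ N' : Subgroup (X ⧸ Subgroup.center X), N'.Normal →
      N' ≤ Y.map (QuotientGroup.mk' (Subgroup.center X)) →
      N' = ⊥ ∨ N' = Y.map (QuotientGroup.mk' (Subgroup.center X)))
    (Q : Subgroup X) (hQcard : Nat.card Q = p ^ 2) (hQelem : ∀ a ∈ Q, a ^ p = 1)
    (hXYQ : Y ⊔ Q = ⊤) :
    (∀ a ∈ Q, a ≠ 1 →
      Y ⊓ Subgroup.centralizer {a} = Y ⊓ Subgroup.centralizer (Y : Set X)) ∧
    False := by
  have := Fact.mk hp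
  set π := QuotientGroup.mk' (center X)
  set W := Y.map π
  have hπ : Function.Surjective π := QuotientGroup.mk'_surjective _
  have : W.Normal := hYnorm.map π hπ
  have : Group.IsNilpotent W := Group.nilpotent_of_surjective _ (π.subgroupMap_surjective Y)
  have : IsMulCommutative W := isMulCommutative_of_minimal_normal hmin_ne hmin
  have : IsMulCommutative Q := IsPGroup.isMulCommutative_of_card_eq_prime_sq hQcard
  have hsup : W ⊔ Q.map π = ⊤ := by rw [← Subgroup.map_sup, hXYQ, map_top_of_surjective π hπ]
  have hQcent : ∀ q ∈ Q, q ∈ centralizer (Y : Set X) → q = 1 := fun q hq hqY =>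
    eq_one_of_mem_centralizer_of_pow_eq_one V Y hVfaithful hqY (hQelem q hq)
  have hQπ : ∀ q ∈ Q, π q = 1 → q = 1 := fun q hq hq1 =>
    hQcent q hq (center_le_centralizer _ ((QuotientGroup.eq_one_iff q).mp hq1))
  have hfree : ∀ g ∈ Q.map π, g ≠ 1 → W ⊓ centralizer {g} = ⊥ := by
    rintro _ ⟨q, hq, rfl⟩ hq1
    refine (hmin _ (normal_inf_centralizer_of_sup_eq_top hsup (mem_map_of_mem π hq))
      inf_le_left).resolve_right fun h => hq1 ?_
    rw [hQcent q hq (mem_centralizer_of_map_mk'_le_centralizer hp hYp' (hQelem q hq)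
      (inf_eq_left.mp h)), map_one]
  have hQπexp : ∀ g ∈ Q.map π, g ^ p = 1 := by
    rintro _ ⟨q, hq, rfl⟩
    rw [← map_pow, hQelem q hq, map_one]
  have hexp : ∀ w ∈ W, w ^ p = 1 := fun w => pow_eq_one_of_inf_centralizer_eq_bot
    ((card_map_of_forall_map_eq_one hQπ).trans hQcard) hQπexp hfree
  refine (hmin_ne ((eq_bot_iff_forall W).mpr fun w hw => ?_)).elim
  exact eq_one_of_pow_eq_one_of_not_dvd_card hp (fun h => hYp' (h.trans (card_map_dvd Y π))) hw
    (hexp w hw)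

/-- The configuration `X = YQ` with `Y` a nilpotent normal `p'`-subgroup acting
irreducibly on a faithful simple module `V`, `Y/Z(Y)` minimal normal in `X/Z(X)`,
`Z(Y) ≤ Z(X)`, and `Q` elementary Abelian of order `p ^ 2`, is impossible: indeed
each `C_Y(a) = Z(Y)` for `a ∈ Q \ {1}`, contradicting
`Y = ⟨C_Y(a) : a ∈ Q \ {1}⟩ ≠ Z(Y)`. -/
theorem nilpotent_case_contradiction
    (p : ℕ) (hp : p.Prime) (k : Type) [Field k] [IsAlgClosed k] [CharP k p]
    (X : Type) [Group X] [Finite X]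
    (V : Rep k X) [FiniteDimensional k V.V] (hVsimple : Simple V)
    (hVfaithful : Function.Injective V.ρ)
    (Y : Subgroup X) (hYnorm : Y.Normal) (hYnilp : Group.IsNilpotent ↥Y)
    (hYp' : ¬ p ∣ Nat.card Y)
    (hYirr : Simple (resRep Y V))
    (hZYZX : Y ⊓ Subgroup.centralizer (Y : Set X) ≤ Subgroup.center X)
    (hmin_ne : Y.map (QuotientGroup.mk' (Subgroup.center X)) ≠ ⊥)
    (hmin : ∀ N' : Subgroup (X ⧸ Subgroup.center X), N'.Normal →
      N' ≤ Y.map (QuotientGroup.mk' (Subgroup.center X)) →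
      N' = ⊥ ∨ N' = Y.map (QuotientGroup.mk' (Subgroup.center X)))
    (Q : Subgroup X) (hQcard : Nat.card Q = p ^ 2) (hQelem : ∀ a ∈ Q, a ^ p = 1)
    (hXYQ : Y ⊔ Q = ⊤) :
    (∀ a ∈ Q, a ≠ 1 →
      Y ⊓ Subgroup.centralizer {a} = Y ⊓ Subgroup.centralizer (Y : Set X)) ∧
    False :=
  nilpotent_case_contradiction_general p hp k X V hVfaithful Y hYnorm hYnilp hYp' hYirr hmin_ne hmin
    Q hQcard hQelem hXYQ
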